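/- arXiv:1901.09179 — 3 statements merged into one kernel-verified Lean document; each statement's English description precedes it below -/
import Mathlib

section
/- Let f, g : T^2 → R be smooth functions with ∫_{T^2} g dx = 0, and let λ be a positive integer. Then |⨍_{T^2} f(x) g(λx) dx| ≤ √2 ‖f‖_{C^1} ‖g‖_{L^1} / λ. -/
open MeasureTheory Real

set_option maxHeartbeats 1000000

noncomputable section

/-- The fundamental domain of the 2-torus `(ℝ/2πℤ)²`. -/
def T2 : Set (ℝ × ℝ) := Set.Icc 0 (2 * π) ×ˢ Set.Icc 0 (2 * π)

namespace Stmt1Aux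

open Set Pointwise

/-- Half-open fundamental domain. -/
def T2' : Set (ℝ × ℝ) := Set.Ioc 0 (2 * π) ×ˢ Set.Ioc 0 (2 * π)

lemma smul_set_prod' (r : ℝ) (s t : Set ℝ) : r • (s ×ˢ t) = (r • s) ×ˢ (r • t) := by
  ext ⟨a, b⟩
  simp only [Set.mem_smul_set, Set.mem_prod, Prod.exists, Prod.smul_mk, Prod.mk.injEq]
  constructor
  · rintro ⟨u, v, ⟨hu, hv⟩, rfl, rfl⟩
    exact ⟨⟨u, hu, rfl⟩, ⟨v, hv, rfl⟩⟩
  · rintro ⟨⟨u, hu, rfl⟩, ⟨v, hv, rfl⟩⟩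
    exact ⟨u, v, ⟨hu, hv⟩, rfl, rfl⟩

lemma mem_Ioc_tile {h : ℝ} (hh : 0 ≤ h) : ∀ (n : ℕ) (a : ℝ),
    a ∈ Ioc 0 ((n : ℝ) * h) ↔ ∃ j, j < n ∧ a ∈ Ioc ((j : ℝ) * h) (((j : ℝ) + 1) * h) := by
  intro n
  induction n with
  | zero => intro a; simp
  | succ n ih =>
    intro a
    have h1 : (0:ℝ) ≤ (n:ℝ) * h := by positivity
    have h2 : (n:ℝ) * h ≤ ((n:ℝ)+1) * h := by nlinarith
    have : Ioc (0:ℝ) (((n:ℕ)+1 : ℝ) * h) = Ioc 0 ((n:ℝ)*h) ∪ Ioc ((n:ℝ)*h) (((n:ℝ)+1)*h) := by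
      rw [Set.Ioc_union_Ioc_eq_Ioc h1 h2]
    rw [show ((n+1 : ℕ) : ℝ) = ((n:ℕ):ℝ) + 1 by push_cast; ring, this]
    simp only [Set.mem_union, ih]
    constructor
    · rintro (⟨j, hj, hja⟩ | ha)
      · exact ⟨j, Nat.lt_succ_of_lt hj, hja⟩
      · exact ⟨n, Nat.lt_succ_self n, ha⟩
    · rintro ⟨j, hj, hja⟩
      rcases Nat.lt_succ_iff_lt_or_eq.1 hj with hj | rfl
      · exact Or.inl ⟨j, hj, hja⟩
      · exact Or.inr hja

lemma periodic_reduce {F : ℝ × ℝ → ℝ}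
    (h1 : ∀ x : ℝ × ℝ, F (x.1 + 2 * π, x.2) = F x)
    (h2 : ∀ x : ℝ × ℝ, F (x.1, x.2 + 2 * π) = F x) (x : ℝ × ℝ) :
    ∃ y ∈ T2, F y = F x := by
  have hπ : (0:ℝ) < 2 * π := by positivity
  set k1 : ℤ := ⌊x.1 / (2 * π)⌋
  set k2 : ℤ := ⌊x.2 / (2 * π)⌋
  refine ⟨(x.1 - (k1:ℝ) * (2*π), x.2 - (k2:ℝ) * (2*π)), ?_, ?_⟩
  · constructor
    · exact ⟨Int.sub_floor_div_mul_nonneg x.1 hπ, (Int.sub_floor_div_mul_lt x.1 hπ).le⟩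
    · exact ⟨Int.sub_floor_div_mul_nonneg x.2 hπ, (Int.sub_floor_div_mul_lt x.2 hπ).le⟩
  · have p1 : Function.Periodic (fun a => F (a, x.2 - (k2:ℝ) * (2*π))) (2 * π) :=
      fun a => h1 (a, _)
    have p2 : Function.Periodic (fun b => F (x.1, b)) (2 * π) := fun b => h2 (x.1, b)
    calc F (x.1 - (k1:ℝ) * (2*π), x.2 - (k2:ℝ)*(2*π))
        = F (x.1, x.2 - (k2:ℝ)*(2*π)) := p1.sub_int_mul_eq k1
      _ = F (x.1, x.2) := p2.sub_int_mul_eq k2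

lemma bddAbove_range_of_reduce {G : ℝ × ℝ → ℝ} (hc : Continuous G)
    (hred : ∀ x, ∃ y ∈ T2, G y = G x) : BddAbove (Set.range G) := by
  have hK : IsCompact T2 := (isCompact_Icc).prod isCompact_Icc
  have : BddAbove (G '' T2) := hK.bddAbove_image hc.continuousOn
  refine this.mono ?_
  rintro _ ⟨x, rfl⟩
  obtain ⟨y, hy, hyx⟩ := hred x
  exact ⟨y, hy, hyx⟩

lemma fderiv_periodic {f : ℝ × ℝ → ℝ} (hf : ContDiff ℝ (⊤ : ℕ∞) f) (v : ℝ × ℝ)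
    (hper : ∀ y : ℝ × ℝ, f (y + v) = f y) (x : ℝ × ℝ) :
    fderiv ℝ f (x + v) = fderiv ℝ f x := by
  have hd : ∀ z : ℝ × ℝ, HasFDerivAt f (fderiv ℝ f z) z := fun z =>
    (hf.differentiable (by simp) z).hasFDerivAt
  have h1 : HasFDerivAt (fun y => f (y + v)) ((fderiv ℝ f (x + v)).comp
      (ContinuousLinearMap.id ℝ (ℝ × ℝ))) x :=
    (hd (x + v)).comp x ((hasFDerivAt_id x).add_const v)
  have h2 : (fun y => f (y + v)) = f := funext hper
  rw [h2, ContinuousLinearMap.comp_id] at h1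
  exact h1.fderiv.symm.trans (hd x).fderiv

lemma T2_ae_eq : T2 =ᵐ[(volume : Measure (ℝ × ℝ))] T2' := by
  rw [Filter.eventuallyEq_set]
  have hnull : (volume : Measure (ℝ × ℝ))
      (({0} : Set ℝ) ×ˢ (univ : Set ℝ) ∪ (univ : Set ℝ) ×ˢ ({0} : Set ℝ)) = 0 := by
    refine measure_union_null ?_ ?_ <;>
      · rw [MeasureTheory.Measure.volume_eq_prod, Measure.prod_prod]
        simp
  refine ae_iff.2 (measure_mono_null ?_ hnull)
  rintro ⟨a, b⟩ h
  simp only [T2, T2', Set.mem_setOf_eq, Set.mem_prod, Set.mem_Icc, Set.mem_Ioc] at h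
  simp only [Set.mem_union, Set.mem_prod, Set.mem_singleton_iff, Set.mem_univ, and_true, true_and]
  by_contra hab
  push_neg at hab
  obtain ⟨ha, hb⟩ := hab
  apply h
  constructor
  · rintro ⟨⟨h1, h2⟩, h3, h4⟩
    exact ⟨⟨lt_of_le_of_ne h1 (Ne.symm ha), h2⟩, ⟨lt_of_le_of_ne h3 (Ne.symm hb), h4⟩⟩
  · rintro ⟨⟨h1, h2⟩, h3, h4⟩
    exact ⟨⟨h1.le, h2⟩, ⟨h3.le, h4⟩⟩

lemma scale_integral (φ : ℝ × ℝ → ℝ) {L h : ℝ} (hL : 0 < L) (hLh : L * h = 2 * π) :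
    ∫ x in Ioc (0:ℝ) h ×ˢ Ioc (0:ℝ) h, φ (L • x) = (L ^ 2)⁻¹ * ∫ x in T2', φ x := by
  have := MeasureTheory.Measure.setIntegral_comp_smul_of_pos (volume : Measure (ℝ × ℝ)) φ
    (Ioc (0:ℝ) h ×ˢ Ioc (0:ℝ) h) hL
  rw [this]
  have hset : L • (Ioc (0:ℝ) h ×ˢ Ioc (0:ℝ) h) = T2' := by
    rw [smul_set_prod', LinearOrderedField.smul_Ioc hL]
    simp only [smul_eq_mul, mul_zero, hLh, T2']
  rw [hset]
  have : Module.finrank ℝ (ℝ × ℝ) = 2 := by simp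
  rw [this, smul_eq_mul]

lemma per_nat {G : ℝ × ℝ → ℝ}
    (h1 : ∀ x : ℝ × ℝ, G (x.1 + 2 * π, x.2) = G x)
    (h2 : ∀ x : ℝ × ℝ, G (x.1, x.2 + 2 * π) = G x) :
    ∀ (j k : ℕ) (y : ℝ × ℝ), G (y.1 + 2 * π * j, y.2 + 2 * π * k) = G y := by
  have key1 : ∀ (j : ℕ) (y : ℝ × ℝ), G (y.1 + 2 * π * j, y.2) = G y := by
    intro j
    induction j with
    | zero => intro y; simp
    | succ j ih =>
      intro y
      have : y.1 + 2 * π * (j + 1 : ℕ) = (y.1 + 2 * π * j) + 2 * π := by push_cast; ring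
      rw [this]
      have := h1 (y.1 + 2 * π * j, y.2)
      simp only at this
      rw [this, ih]
  have key2 : ∀ (k : ℕ) (y : ℝ × ℝ), G (y.1, y.2 + 2 * π * k) = G y := by
    intro k
    induction k with
    | zero => intro y; simp
    | succ k ih =>
      intro y
      have : y.2 + 2 * π * (k + 1 : ℕ) = (y.2 + 2 * π * k) + 2 * π := by push_cast; ring
      rw [this]
      have := h2 (y.1, y.2 + 2 * π * k)
      simp only at this
      rw [this, ih]
  intro j k y
  have := key2 k (y.1 + 2 * π * j, y.2)
  simp only at this
  rw [this, key1]

end Stmt1Aux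

open Stmt1Aux Set Pointwise

/-- Mean value estimate for products of slow and fast oscillating functions. -/
theorem stmt1 (f g : ℝ × ℝ → ℝ)
    (hf : ContDiff ℝ (⊤ : ℕ∞) f) (hg : ContDiff ℝ (⊤ : ℕ∞) g)
    (hfper1 : ∀ x : ℝ × ℝ, f (x.1 + 2 * π, x.2) = f x)
    (hfper2 : ∀ x : ℝ × ℝ, f (x.1, x.2 + 2 * π) = f x)
    (hgper1 : ∀ x : ℝ × ℝ, g (x.1 + 2 * π, x.2) = g x)
    (hgper2 : ∀ x : ℝ × ℝ, g (x.1, x.2 + 2 * π) = g x)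
    (hgmean : ∫ x in T2, g x = 0)
    (lam : ℕ) (hlam : 0 < lam) :
    |⨍ x in T2, f x * g ((lam : ℝ) • x)|
      ≤ Real.sqrt 2 * ((⨆ x : ℝ × ℝ, |f x|) + ⨆ x : ℝ × ℝ, ‖fderiv ℝ f x‖)
          * (∫ x in T2, |g x|) / lam := by
  have hπ : (0:ℝ) < π := pi_pos
  set L : ℝ := (lam : ℝ) with hLdef
  have hL : 0 < L := by rw [hLdef]; exact_mod_cast hlam
  set h : ℝ := 2 * π / L with hhdef
  have hh : 0 < h := by positivity
  have hLh : L * h = 2 * π := by rw [hhdef]; field_simp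
  set M1 : ℝ := ⨆ x : ℝ × ℝ, |f x| with hM1def
  set M2 : ℝ := ⨆ x : ℝ × ℝ, ‖fderiv ℝ f x‖ with hM2def
  set A : ℝ := ∫ x in T2, |g x| with hAdef
  have hA : 0 ≤ A := integral_nonneg fun x => abs_nonneg _
  -- sup bounds
  have hBf : BddAbove (Set.range fun x : ℝ × ℝ => |f x|) :=
    bddAbove_range_of_reduce hf.continuous.abs
      (periodic_reduce (fun x => by rw [hfper1]) (fun x => by rw [hfper2]))
  have hM1 : ∀ x, |f x| ≤ M1 := fun x => le_ciSup hBf x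
  have hM1nn : 0 ≤ M1 := (abs_nonneg _).trans (hM1 0)
  have hfd : Continuous fun x => ‖fderiv ℝ f x‖ := (hf.continuous_fderiv (by simp)).norm
  have hv1 : ∀ y : ℝ × ℝ, f (y + ((2*π, 0) : ℝ × ℝ)) = f y := by
    intro y
    have : y + ((2*π, 0) : ℝ × ℝ) = (y.1 + 2*π, y.2) := by
      ext <;> simp
    rw [this, hfper1]
  have hv2 : ∀ y : ℝ × ℝ, f (y + ((0, 2*π) : ℝ × ℝ)) = f y := by
    intro y
    have : y + ((0, 2*π) : ℝ × ℝ) = (y.1, y.2 + 2*π) := by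
      ext <;> simp
    rw [this, hfper2]
  have hBD : BddAbove (Set.range fun x : ℝ × ℝ => ‖fderiv ℝ f x‖) := by
    refine bddAbove_range_of_reduce hfd (periodic_reduce ?_ ?_)
    · intro x
      have : ((x.1 + 2*π, x.2) : ℝ × ℝ) = x + ((2*π, 0) : ℝ × ℝ) := by ext <;> simp
      rw [this, fderiv_periodic hf _ hv1]
    · intro x
      have : ((x.1, x.2 + 2*π) : ℝ × ℝ) = x + ((0, 2*π) : ℝ × ℝ) := by ext <;> simp
      rw [this, fderiv_periodic hf _ hv2]
  have hM2 : ∀ x, ‖fderiv ℝ f x‖ ≤ M2 := fun x => le_ciSup hBD x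
  have hM2nn : 0 ≤ M2 := (norm_nonneg _).trans (hM2 0)
  -- mean value theorem
  have hMVT : ∀ x c : ℝ × ℝ, |f (x + c) - f c| ≤ M2 * ‖x‖ := by
    intro x c
    have := Convex.norm_image_sub_le_of_norm_fderiv_le
      (f := f) (C := M2) (s := (univ : Set (ℝ × ℝ)))
      (fun y _ => (hf.differentiable (by simp) y)) (fun y _ => hM2 y) convex_univ
      (Set.mem_univ c) (Set.mem_univ (x + c))
    simpa [Real.norm_eq_abs, add_sub_cancel_right] using this
  -- continuity and integrability
  have hgc : Continuous g := hg.continuous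
  have hFc : Continuous fun x : ℝ × ℝ => f x * g (L • x) :=
    hf.continuous.mul (hgc.comp (continuous_const_smul L))
  have hint : ∀ {φ : ℝ × ℝ → ℝ}, Continuous φ → ∀ {s : Set (ℝ × ℝ)} {a b c d : ℝ},
      s ⊆ Icc a b ×ˢ Icc c d → IntegrableOn φ s := by
    intro φ hφ s a b c d hs
    exact (hφ.locallyIntegrable.integrableOn_isCompact
      (isCompact_Icc.prod isCompact_Icc)).mono_set hs
  -- tiles
  set Q : ℕ × ℕ → Set (ℝ × ℝ) := fun p =>
    Ioc ((p.1:ℝ)*h) (((p.1:ℝ)+1)*h) ×ˢ Ioc ((p.2:ℝ)*h) (((p.2:ℝ)+1)*h) with hQdef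
  set c : ℕ × ℕ → ℝ × ℝ := fun p => ((p.1:ℝ)*h, (p.2:ℝ)*h) with hcdef
  set Q0 : Set (ℝ × ℝ) := Ioc (0:ℝ) h ×ˢ Ioc (0:ℝ) h with hQ0def
  have hQmeas : ∀ p : ℕ × ℕ, MeasurableSet (Q p) := fun p =>
    measurableSet_Ioc.prod measurableSet_Ioc
  have hQsub : ∀ p : ℕ × ℕ, Q p ⊆ Icc ((p.1:ℝ)*h) (((p.1:ℝ)+1)*h) ×ˢ Icc ((p.2:ℝ)*h) (((p.2:ℝ)+1)*h) :=
    fun p => Set.prod_mono Set.Ioc_subset_Icc_self Set.Ioc_subset_Icc_self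
  have hQ0sub : Q0 ⊆ Icc (0:ℝ) h ×ˢ Icc (0:ℝ) h :=
    Set.prod_mono Set.Ioc_subset_Icc_self Set.Ioc_subset_Icc_self
  have hunion : (⋃ p ∈ Finset.range lam ×ˢ Finset.range lam, Q p) = T2' := by
    ext ⟨a, b⟩
    simp only [Set.mem_iUnion, Finset.mem_product, Finset.mem_range, T2', Set.mem_prod,
      exists_prop, Prod.exists, hQdef]
    have h2π : (2:ℝ) * π = (lam : ℝ) * h := hLh.symm
    rw [h2π]
    rw [mem_Ioc_tile hh.le lam a, mem_Ioc_tile hh.le lam b]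
    constructor
    · rintro ⟨j, k, ⟨hj, hk⟩, hja, hkb⟩
      exact ⟨⟨j, hj, hja⟩, ⟨k, hk, hkb⟩⟩
    · rintro ⟨⟨j, hj, hja⟩, ⟨k, hk, hkb⟩⟩
      exact ⟨j, k, ⟨hj, hk⟩, hja, hkb⟩
  -- disjointness
  have hIocDisj : ∀ {j k : ℕ}, j ≠ k →
      Disjoint (Ioc ((j:ℝ)*h) (((j:ℝ)+1)*h)) (Ioc ((k:ℝ)*h) (((k:ℝ)+1)*h)) := by
    intro j k hjk
    rw [Set.Ioc_disjoint_Ioc]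
    rcases lt_or_gt_of_ne hjk with hlt | hlt
    · have : ((j:ℝ)+1) ≤ (k:ℝ) := by exact_mod_cast hlt
      calc min (((j:ℝ)+1)*h) (((k:ℝ)+1)*h) ≤ ((j:ℝ)+1)*h := min_le_left _ _
        _ ≤ (k:ℝ)*h := by nlinarith
        _ ≤ max ((j:ℝ)*h) ((k:ℝ)*h) := le_max_right _ _
    · have : ((k:ℝ)+1) ≤ (j:ℝ) := by exact_mod_cast hlt
      calc min (((j:ℝ)+1)*h) (((k:ℝ)+1)*h) ≤ ((k:ℝ)+1)*h := min_le_right _ _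
        _ ≤ (j:ℝ)*h := by nlinarith
        _ ≤ max ((j:ℝ)*h) ((k:ℝ)*h) := le_max_left _ _
  have hdisj : (↑(Finset.range lam ×ˢ Finset.range lam) : Set (ℕ × ℕ)).Pairwise
      (Function.onFun Disjoint Q) := by
    intro p _ q _ hpq
    have : p.1 ≠ q.1 ∨ p.2 ≠ q.2 := by
      by_contra hcon
      push_neg at hcon
      exact hpq (Prod.ext hcon.1 hcon.2)
    rcases this with h1 | h1
    · refine Set.disjoint_left.2 fun x hx hx' => ?_
      exact Set.disjoint_left.1 (hIocDisj h1) hx.1 hx'.1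
    · refine Set.disjoint_left.2 fun x hx hx' => ?_
      exact Set.disjoint_left.1 (hIocDisj h1) hx.2 hx'.2
  -- zero mean over T2'
  have hgmean' : ∫ x in T2', g x = 0 := by
    rw [← setIntegral_congr_set T2_ae_eq]; exact hgmean
  have hAeq : ∫ x in T2', |g x| = A := by
    rw [hAdef, setIntegral_congr_set T2_ae_eq]
  -- per-tile estimates
  have htile : ∀ p : ℕ × ℕ,
      |∫ x in Q p, f x * g (L • x)| ≤ M2 * h * ((L ^ 2)⁻¹ * A) := by
    intro p
    -- translation
    have hpre : (fun x : ℝ × ℝ => x + c p) ⁻¹' Q p = Q0 := by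
      ext ⟨a, b⟩
      simp only [Set.mem_preimage, hQdef, hcdef, hQ0def, Set.mem_prod, Set.mem_Ioc,
        Prod.mk_add_mk, Prod.fst, Prod.snd]
      constructor
      · rintro ⟨⟨h1, h2⟩, h3, h4⟩
        exact ⟨⟨by linarith, by linarith⟩, by linarith, by linarith⟩
      · rintro ⟨⟨h1, h2⟩, h3, h4⟩
        exact ⟨⟨by linarith, by linarith⟩, by linarith, by linarith⟩
    have htrans : ∫ x in Q p, f x * g (L • x)
        = ∫ x in Q0, f (x + c p) * g (L • (x + c p)) := by
      rw [← (measurePreserving_add_right (volume : Measure (ℝ × ℝ)) (c p)).setIntegral_preimage_emb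
        (measurableEmbedding_addRight (c p)) (fun x => f x * g (L • x)) (Q p), hpre]
    -- periodicity of g kills the shift
    have hgshift : ∀ x : ℝ × ℝ, g (L • (x + c p)) = g (L • x) := by
      intro x
      have hx1 : L • (x + c p) = (((L • x).1 + 2 * π * p.1, (L • x).2 + 2 * π * p.2) : ℝ × ℝ) := by
        ext
        · show L * (x.1 + (p.1:ℝ)*h) = L * x.1 + 2 * π * p.1
          have : L * ((p.1:ℝ)*h) = 2 * π * p.1 := by
            rw [show L * ((p.1:ℝ)*h) = (p.1:ℝ) * (L * h) by ring, hLh]; ring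
          linarith [this]
        · show L * (x.2 + (p.2:ℝ)*h) = L * x.2 + 2 * π * p.2
          have : L * ((p.2:ℝ)*h) = 2 * π * p.2 := by
            rw [show L * ((p.2:ℝ)*h) = (p.2:ℝ) * (L * h) by ring, hLh]; ring
          linarith [this]
      rw [hx1, per_nat hgper1 hgper2 p.1 p.2 (L • x)]
    have htrans2 : ∫ x in Q p, f x * g (L • x)
        = ∫ x in Q0, f (x + c p) * g (L • x) := by
      rw [htrans]
      congr 1
      funext x
      rw [hgshift]
    -- zero mean of the fast factor on the small square
    have hzero : ∫ x in Q0, g (L • x) = 0 := by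
      rw [hQ0def, scale_integral g hL hLh, hgmean', mul_zero]
    -- integrability
    have hint1 : IntegrableOn (fun x => f (x + c p) * g (L • x)) Q0 := by
      refine hint ?_ hQ0sub
      exact (hf.continuous.comp (continuous_id.add continuous_const)).mul
        (hgc.comp (continuous_const_smul L))
    have hint2 : IntegrableOn (fun x => g (L • x)) Q0 := by
      refine hint ?_ hQ0sub
      exact hgc.comp (continuous_const_smul L)
    have hsub : ∫ x in Q0, f (x + c p) * g (L • x)
        = ∫ x in Q0, (f (x + c p) - f (c p)) * g (L • x) := by
      have : ∫ x in Q0, (f (x + c p) - f (c p)) * g (L • x)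
          = (∫ x in Q0, f (x + c p) * g (L • x)) - f (c p) * ∫ x in Q0, g (L • x) := by
        rw [← integral_const_mul, ← integral_sub hint1 (hint2.const_mul _)]
        congr 1; funext x; ring
      rw [this, hzero, mul_zero, sub_zero]
    -- pointwise bound
    have hptwise : ∀ x ∈ Q0, |(f (x + c p) - f (c p)) * g (L • x)| ≤ M2 * h * |g (L • x)| := by
      intro x hx
      rw [abs_mul]
      refine mul_le_mul_of_nonneg_right ?_ (abs_nonneg _)
      refine (hMVT x (c p)).trans ?_
      have hxn : ‖x‖ ≤ h := by
        rw [Prod.norm_def]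
        have h1 : |x.1| ≤ h := abs_le.2 ⟨by linarith [hx.1.1, hh], hx.1.2⟩
        have h2 : |x.2| ≤ h := abs_le.2 ⟨by linarith [hx.2.1, hh], hx.2.2⟩
        exact max_le h1 h2
      calc M2 * ‖x‖ ≤ M2 * h := mul_le_mul_of_nonneg_left hxn hM2nn
        _ = M2 * h := rfl
    -- assemble
    have habs : ∫ x in Q0, |g (L • x)| = (L ^ 2)⁻¹ * A := by
      rw [hQ0def, scale_integral (fun y => |g y|) hL hLh, hAeq]
    calc |∫ x in Q p, f x * g (L • x)|
        = |∫ x in Q0, (f (x + c p) - f (c p)) * g (L • x)| := by rw [htrans2, hsub]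
      _ ≤ ∫ x in Q0, |(f (x + c p) - f (c p)) * g (L • x)| := by
          exact norm_integral_le_integral_norm
              (f := fun x => (f (x + c p) - f (c p)) * g (L • x))
      _ ≤ ∫ x in Q0, M2 * h * |g (L • x)| := by
          refine setIntegral_mono_on ?_ ?_ (measurableSet_Ioc.prod measurableSet_Ioc) hptwise
          · have : IntegrableOn (fun x => (f (x + c p) - f (c p)) * g (L • x)) Q0 := by
              refine hint ?_ hQ0sub
              exact ((hf.continuous.comp (continuous_id.add continuous_const)).sub
                continuous_const).mul (hgc.comp (continuous_const_smul L))
            exact this.abs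
          · exact (hint2.abs.const_mul _)
      _ = M2 * h * ∫ x in Q0, |g (L • x)| := integral_const_mul _ _
      _ = M2 * h * ((L ^ 2)⁻¹ * A) := by rw [habs]
  -- sum over tiles
  have hFint : ∀ p : ℕ × ℕ, p ∈ Finset.range lam ×ˢ Finset.range lam →
      IntegrableOn (fun x => f x * g (L • x)) (Q p) := fun p _ => hint hFc (hQsub p)
  have hsplit : ∫ x in T2, f x * g (L • x) = ∑ p ∈ Finset.range lam ×ˢ Finset.range lam,
      ∫ x in Q p, f x * g (L • x) := by
    rw [setIntegral_congr_set T2_ae_eq, ← hunion]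
    exact integral_biUnion_finset _ (fun p _ => hQmeas p) hdisj hFint
  have hsum : |∫ x in T2, f x * g (L • x)| ≤ M2 * h * A := by
    rw [hsplit]
    calc |∑ p ∈ Finset.range lam ×ˢ Finset.range lam, ∫ x in Q p, f x * g (L • x)|
        ≤ ∑ p ∈ Finset.range lam ×ˢ Finset.range lam, |∫ x in Q p, f x * g (L • x)| :=
          Finset.abs_sum_le_sum_abs _ _
      _ ≤ ∑ _p ∈ Finset.range lam ×ˢ Finset.range lam, M2 * h * ((L ^ 2)⁻¹ * A) :=
          Finset.sum_le_sum fun p _ => htile p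
      _ = (lam * lam : ℕ) * (M2 * h * ((L ^ 2)⁻¹ * A)) := by
          rw [Finset.sum_const, Finset.card_product, Finset.card_range]
          push_cast; ring
      _ = M2 * h * A := by
          have : ((lam * lam : ℕ) : ℝ) = L ^ 2 := by push_cast [hLdef]; ring
          rw [this]
          field_simp
  -- volume of T2
  have hvol : (volume T2).toReal = (2 * π) * (2 * π) := by
    rw [show T2 = Set.Icc 0 (2*π) ×ˢ Set.Icc 0 (2*π) from rfl,
      MeasureTheory.Measure.volume_eq_prod, Measure.prod_prod, Real.volume_Icc]
    rw [ENNReal.toReal_mul, ENNReal.toReal_ofReal (by nlinarith [pi_pos] : (0:ℝ) ≤ 2*π - 0)]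
    norm_num
  -- final assembly
  rw [setAverage_eq, measureReal_def, hvol, smul_eq_mul, abs_mul, abs_inv,
    abs_of_nonneg (by positivity : (0:ℝ) ≤ (2*π)*(2*π))]
  have hstep : ((2*π)*(2*π))⁻¹ * |∫ x in T2, f x * g (L • x)|
      ≤ ((2*π)*(2*π))⁻¹ * (M2 * h * A) := by
    exact mul_le_mul_of_nonneg_left hsum (by positivity)
  refine hstep.trans ?_
  have hsqrt2 : (1:ℝ) ≤ Real.sqrt 2 := by
    nlinarith [Real.sq_sqrt (by norm_num : (0:ℝ) ≤ 2), Real.sqrt_nonneg 2]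
  have hπ3 : (3:ℝ) < π := pi_gt_three
  have heq : ((2*π)*(2*π))⁻¹ * (M2 * h * A) = M2 * A / (2*π*L) := by
    rw [hhdef]; field_simp
  rw [heq, div_le_div_iff₀ (by positivity) hL]
  have hX : 0 ≤ (M1 + M2) * A * L := by positivity
  nlinarith [mul_nonneg hM1nn hA, mul_nonneg (mul_nonneg hM1nn hA) hL.le,
    mul_nonneg (mul_nonneg hM2nn hA) hL.le, hX,
    mul_le_mul_of_nonneg_left hsqrt2 hX, mul_pos hπ hL,
    mul_nonneg (mul_nonneg (mul_nonneg hM2nn hA) hL.le) hπ.le]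
end
end

section
/- Let Λ be a finite symmetric subset of S^1 ∩ Q^2 (i.e., ξ ∈ Λ implies −ξ ∈ Λ) such that λΛ ⊂ Z^2 for some positive integer λ. For coefficients a_ξ ∈ C with conj(a_ξ) = a_{−ξ}, define W(x) = Σ_{ξ∈Λ} a_ξ i ξ^⊥ e^{i λ ξ·x} and Ψ(x) = Σ_{ξ∈Λ} a_ξ e^{i λ ξ·x}. Then W and Ψ are real-valued, W = λ^{-1}∇^⊥Ψ (equivalently W is the perpendicular gradient of a stream function), div W = 0, and div(W ⊗ W) = ∇(|W|²/2 + Ψ²/2). -/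
/-!
Each plane wave `e^{iλξ·x}` is an eigenfunction of every derivative, so the linear identities for
`W` and `Ψ` hold coefficientwise: `λ W = ∇^⊥Ψ`, `div W = 0`, and, since `|ξ| = 1`,
`curl W = -λΨ`. In the plane `div (W ⊗ W) = W div W + ∇(|W|²/2) + curl W • W^⊥`, and with
`curl W = -λΨ` and `λ W^⊥ = -∇Ψ` the last term is `∇(Ψ²/2)`. Reality follows by pairing the
terms `ξ` and `-ξ`.
-/

noncomputable section

open Complex

section Euler

variable {E : Type*} [NormedAddCommGroup E] [NormedSpace ℝ E] {f g W₁ W₂ Ψ : E → ℂ} {x : E}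

lemma fderiv_mul_apply (hf : DifferentiableAt ℝ f x) (hg : DifferentiableAt ℝ g x) (v : E) :
    fderiv ℝ (fun y => f y * g y) x v = f x * fderiv ℝ g x v + g x * fderiv ℝ f x v := by
  rw [fderiv_fun_mul hf hg]
  rfl

lemma HasFDerivAt.sq_div_two {f' : E →L[ℝ] ℂ} (hf : HasFDerivAt f f' x) :
    HasFDerivAt (fun y => f y ^ 2 / 2) (f x • f') x := by
  simp only [div_eq_mul_inv]
  refine ((hf.pow 2).mul_const (2⁻¹ : ℂ)).congr_fderiv ?_
  ext v
  simp only [Nat.add_one_sub_one, pow_one, nsmul_eq_mul, Nat.cast_ofNat, smul_apply, smul_eq_mul]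
  ring

lemma fderiv_energy_apply (h₁ : DifferentiableAt ℝ W₁ x) (h₂ : DifferentiableAt ℝ W₂ x)
    (hΨ : DifferentiableAt ℝ Ψ x) (v : E) :
    fderiv ℝ (fun y => (W₁ y ^ 2 + W₂ y ^ 2) / 2 + Ψ y ^ 2 / 2) x v =
      W₁ x * fderiv ℝ W₁ x v + W₂ x * fderiv ℝ W₂ x v + Ψ x * fderiv ℝ Ψ x v := by
  simp only [add_div]
  rw [((h₁.hasFDerivAt.sq_div_two.fun_add h₂.hasFDerivAt.sq_div_two).fun_add
    hΨ.hasFDerivAt.sq_div_two).fderiv]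
  rfl

theorem div_tensor_eq_grad_of_perp_grad (e₁ e₂ : E) (k : ℂ) (h₁ : DifferentiableAt ℝ W₁ x)
    (h₂ : DifferentiableAt ℝ W₂ x) (hΨ : DifferentiableAt ℝ Ψ x)
    (hW₁ : k * W₁ x = -fderiv ℝ Ψ x e₂) (hW₂ : k * W₂ x = fderiv ℝ Ψ x e₁)
    (hdiv : fderiv ℝ W₁ x e₁ + fderiv ℝ W₂ x e₂ = 0)
    (hcurl : fderiv ℝ W₂ x e₁ - fderiv ℝ W₁ x e₂ = -k * Ψ x) :
    (fderiv ℝ (fun y => W₁ y * W₁ y) x e₁ + fderiv ℝ (fun y => W₁ y * W₂ y) x e₂ =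
        fderiv ℝ (fun y => (W₁ y ^ 2 + W₂ y ^ 2) / 2 + Ψ y ^ 2 / 2) x e₁) ∧
      (fderiv ℝ (fun y => W₂ y * W₁ y) x e₁ + fderiv ℝ (fun y => W₂ y * W₂ y) x e₂ =
        fderiv ℝ (fun y => (W₁ y ^ 2 + W₂ y ^ 2) / 2 + Ψ y ^ 2 / 2) x e₂) := by
  simp only [fderiv_mul_apply h₁ h₂, fderiv_mul_apply h₂ h₁, fderiv_mul_apply h₁ h₁,
    fderiv_mul_apply h₂ h₂, fderiv_energy_apply h₁ h₂ hΨ]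
  constructor
  · linear_combination W₁ x * hdiv - W₂ x * hcurl + Ψ x * hW₂
  · linear_combination W₂ x * hdiv + W₁ x * hcurl - Ψ x * hW₁

end Euler

def waveSum (Λ : Finset (ℝ × ℝ)) (c : ℝ × ℝ → ℂ) (k : ℂ) (x : ℝ × ℝ) : ℂ :=
  ∑ ξ ∈ Λ, c ξ * exp (I * k * (ξ.1 * x.1 + ξ.2 * x.2))

def pairingCLM (ξ : ℝ × ℝ) : (ℝ × ℝ) →L[ℝ] ℂ :=
  ofRealCLM.comp (ξ.1 • ContinuousLinearMap.fst ℝ ℝ ℝ + ξ.2 • ContinuousLinearMap.snd ℝ ℝ ℝ)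

@[simp] lemma pairingCLM_apply (ξ v : ℝ × ℝ) : pairingCLM ξ v = ξ.1 * v.1 + ξ.2 * v.2 := by
  simp [pairingCLM]

def ConjSymmOn (Λ : Finset (ℝ × ℝ)) (c : ℝ × ℝ → ℂ) : Prop :=
  ∀ ξ ∈ Λ, starRingEnd ℂ (c ξ) = c (-ξ)

section waveSum

variable {Λ : Finset (ℝ × ℝ)} {c d : ℝ × ℝ → ℂ} {k : ℂ}

lemma hasFDerivAt_waveSum (x : ℝ × ℝ) :
    HasFDerivAt (waveSum Λ c k)
      (∑ ξ ∈ Λ, c ξ • exp (I * k * (ξ.1 * x.1 + ξ.2 * x.2)) • (I * k) • pairingCLM ξ) x := by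
  refine HasFDerivAt.fun_sum fun ξ _ => ?_
  simp only [← pairingCLM_apply]
  exact (((pairingCLM ξ).hasFDerivAt.const_mul (I * k)).cexp).const_mul (c ξ)

lemma differentiable_waveSum : Differentiable ℝ (waveSum Λ c k) :=
  fun x => (hasFDerivAt_waveSum x).differentiableAt

lemma fderiv_waveSum_apply (x v : ℝ × ℝ) :
    fderiv ℝ (waveSum Λ c k) x v =
      waveSum Λ (fun ξ => I * k * (ξ.1 * v.1 + ξ.2 * v.2) * c ξ) k x := by
  rw [(hasFDerivAt_waveSum x).fderiv, waveSum, sum_apply]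
  refine Finset.sum_congr rfl fun ξ _ => ?_
  simp only [smul_apply, pairingCLM_apply, smul_eq_mul]
  ring

lemma waveSum_add (x : ℝ × ℝ) :
    waveSum Λ c k x + waveSum Λ d k x = waveSum Λ (fun ξ => c ξ + d ξ) k x := by
  simp only [waveSum, ← Finset.sum_add_distrib, add_mul]

lemma waveSum_sub (x : ℝ × ℝ) :
    waveSum Λ c k x - waveSum Λ d k x = waveSum Λ (fun ξ => c ξ - d ξ) k x := by
  simp only [waveSum, ← Finset.sum_sub_distrib, sub_mul]

lemma mul_waveSum (z : ℂ) (x : ℝ × ℝ) :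
    z * waveSum Λ c k x = waveSum Λ (fun ξ => z * c ξ) k x := by
  simp only [waveSum, Finset.mul_sum, mul_assoc]

lemma waveSum_congr (h : ∀ ξ ∈ Λ, c ξ = d ξ) : waveSum Λ c k = waveSum Λ d k :=
  funext fun _ => Finset.sum_congr rfl fun ξ hξ => by rw [h ξ hξ]

lemma waveSum_eq_zero (h : ∀ ξ ∈ Λ, c ξ = 0) (x : ℝ × ℝ) : waveSum Λ c k x = 0 :=
  Finset.sum_eq_zero fun ξ hξ => by rw [h ξ hξ, zero_mul]

lemma ConjSymmOn.mul_I_mul_ofReal (hc : ConjSymmOn Λ c) {m : ℝ × ℝ → ℝ}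
    (hm : ∀ ξ, m (-ξ) = -m ξ) : ConjSymmOn Λ (fun ξ => c ξ * I * m ξ) := by
  intro ξ hξ
  simp only [map_mul, hc ξ hξ, conj_I, conj_ofReal, hm, ofReal_neg]
  ring

lemma im_waveSum_eq_zero (hΛ : ∀ ξ ∈ Λ, -ξ ∈ Λ) (hc : ConjSymmOn Λ c)
    (hk : starRingEnd ℂ k = k) (x : ℝ × ℝ) : (waveSum Λ c k x).im = 0 := by
  rw [← conj_eq_iff_im, waveSum, map_sum]
  refine Finset.sum_nbij' Neg.neg Neg.neg hΛ hΛ (fun ξ _ => neg_neg ξ) (fun ξ _ => neg_neg ξ)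
    fun ξ hξ => ?_
  rw [map_mul, hc ξ hξ, ← exp_conj]
  congr 2
  simp only [map_mul, map_add, conj_I, conj_ofReal, hk, Prod.fst_neg, Prod.snd_neg, ofReal_neg]
  ring

lemma mul_waveSum_perp_fst (a : ℝ × ℝ → ℂ) (x : ℝ × ℝ) :
    k * waveSum Λ (fun ξ => a ξ * I * (-ξ.2 : ℝ)) k x = -fderiv ℝ (waveSum Λ a k) x (0, 1) := by
  rw [fderiv_waveSum_apply, mul_waveSum, ← neg_one_mul, mul_waveSum]
  exact congrFun (waveSum_congr fun ξ _ => by push_cast; ring) x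

lemma mul_waveSum_perp_snd (a : ℝ × ℝ → ℂ) (x : ℝ × ℝ) :
    k * waveSum Λ (fun ξ => a ξ * I * (ξ.1 : ℝ)) k x = fderiv ℝ (waveSum Λ a k) x (1, 0) := by
  rw [fderiv_waveSum_apply, mul_waveSum]
  exact congrFun (waveSum_congr fun ξ _ => by push_cast; ring) x

lemma div_waveSum_perp (a : ℝ × ℝ → ℂ) (x : ℝ × ℝ) :
    fderiv ℝ (waveSum Λ (fun ξ => a ξ * I * (-ξ.2 : ℝ)) k) x (1, 0) +
      fderiv ℝ (waveSum Λ (fun ξ => a ξ * I * (ξ.1 : ℝ)) k) x (0, 1) = 0 := by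
  rw [fderiv_waveSum_apply, fderiv_waveSum_apply, waveSum_add]
  exact waveSum_eq_zero (fun ξ _ => by push_cast; ring) x

lemma curl_waveSum_perp (hΛ : ∀ ξ ∈ Λ, ξ.1 ^ 2 + ξ.2 ^ 2 = 1) (a : ℝ × ℝ → ℂ) (x : ℝ × ℝ) :
    fderiv ℝ (waveSum Λ (fun ξ => a ξ * I * (ξ.1 : ℝ)) k) x (1, 0) -
      fderiv ℝ (waveSum Λ (fun ξ => a ξ * I * (-ξ.2 : ℝ)) k) x (0, 1) = -k * waveSum Λ a k x := by
  rw [fderiv_waveSum_apply, fderiv_waveSum_apply, waveSum_sub, mul_waveSum]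
  refine congrFun (waveSum_congr fun ξ hξ => ?_) x
  have hξ' : (ξ.1 : ℂ) ^ 2 + (ξ.2 : ℂ) ^ 2 = 1 := by exact_mod_cast hΛ ξ hξ
  push_cast
  linear_combination (-k * a ξ) * hξ' + (k * a ξ * ((ξ.1 : ℂ) ^ 2 + (ξ.2 : ℂ) ^ 2)) * I_sq

end waveSum

theorem stmt2_general (lam : ℕ) (hlam : 0 < lam) (Λ : Finset (ℝ × ℝ))
    (hsym : ∀ ξ ∈ Λ, -ξ ∈ Λ)
    (hunit : ∀ ξ ∈ Λ, ξ.1 ^ 2 + ξ.2 ^ 2 = 1)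
    (a : ℝ × ℝ → ℂ) (ha : ∀ ξ ∈ Λ, starRingEnd ℂ (a ξ) = a (-ξ))
    (W₁ W₂ Ψ : ℝ × ℝ → ℂ)
    (hW₁ : W₁ = fun x => ∑ ξ ∈ Λ,
      a ξ * Complex.I * (-ξ.2 : ℝ) * Complex.exp (Complex.I * lam * (ξ.1 * x.1 + ξ.2 * x.2)))
    (hW₂ : W₂ = fun x => ∑ ξ ∈ Λ,
      a ξ * Complex.I * (ξ.1 : ℝ) * Complex.exp (Complex.I * lam * (ξ.1 * x.1 + ξ.2 * x.2)))
    (hΨ : Ψ = fun x => ∑ ξ ∈ Λ,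
      a ξ * Complex.exp (Complex.I * lam * (ξ.1 * x.1 + ξ.2 * x.2))) :
    -- W and Ψ are real-valued
    (∀ x : ℝ × ℝ, (W₁ x).im = 0 ∧ (W₂ x).im = 0 ∧ (Ψ x).im = 0) ∧
    -- W = λ⁻¹ ∇^⊥ Ψ
    (∀ x : ℝ × ℝ, W₁ x = -(lam : ℂ)⁻¹ * fderiv ℝ Ψ x (0, 1)
        ∧ W₂ x = (lam : ℂ)⁻¹ * fderiv ℝ Ψ x (1, 0)) ∧
    -- div W = 0
    (∀ x : ℝ × ℝ, fderiv ℝ W₁ x (1, 0) + fderiv ℝ W₂ x (0, 1) = 0) ∧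
    -- div (W ⊗ W) = ∇(|W|²/2 + Ψ²/2)
    (∀ x : ℝ × ℝ,
      (fderiv ℝ (fun y => W₁ y * W₁ y) x (1, 0) + fderiv ℝ (fun y => W₁ y * W₂ y) x (0, 1)
        = fderiv ℝ (fun y => (W₁ y ^ 2 + W₂ y ^ 2) / 2 + Ψ y ^ 2 / 2) x (1, 0)) ∧
      (fderiv ℝ (fun y => W₂ y * W₁ y) x (1, 0) + fderiv ℝ (fun y => W₂ y * W₂ y) x (0, 1)
        = fderiv ℝ (fun y => (W₁ y ^ 2 + W₂ y ^ 2) / 2 + Ψ y ^ 2 / 2) x (0, 1))) := by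
  obtain rfl : W₁ = waveSum Λ (fun ξ => a ξ * I * (-ξ.2 : ℝ)) lam := hW₁
  obtain rfl : W₂ = waveSum Λ (fun ξ => a ξ * I * (ξ.1 : ℝ)) lam := hW₂
  obtain rfl : Ψ = waveSum Λ a lam := hΨ
  have hlam₀ : (lam : ℂ) ≠ 0 := Nat.cast_ne_zero.2 hlam.ne'
  have hreal {c : ℝ × ℝ → ℂ} (hc : ConjSymmOn Λ c) (x : ℝ × ℝ) :=
    im_waveSum_eq_zero hsym hc (conj_natCast lam) x
  refine ⟨fun x => ⟨hreal ?_ x, hreal ?_ x, hreal ha x⟩, fun x => ⟨?_, ?_⟩,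
    div_waveSum_perp a, fun x => div_tensor_eq_grad_of_perp_grad _ _ (lam : ℂ)
      differentiable_waveSum.differentiableAt differentiable_waveSum.differentiableAt
      differentiable_waveSum.differentiableAt (mul_waveSum_perp_fst a x)
      (mul_waveSum_perp_snd a x) (div_waveSum_perp a x) (curl_waveSum_perp hunit a x)⟩
  · exact ConjSymmOn.mul_I_mul_ofReal ha (m := fun ξ => -ξ.2) fun ξ => by simp
  · exact ConjSymmOn.mul_I_mul_ofReal ha (m := fun ξ => ξ.1) fun ξ => by simp
  · rw [neg_mul, ← mul_neg, ← mul_waveSum_perp_fst, inv_mul_cancel_left₀ hlam₀]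
  · rw [← mul_waveSum_perp_snd, inv_mul_cancel_left₀ hlam₀]

/-- Stationary plane-wave solutions of the 2D Euler equations. -/
theorem stmt2 (lam : ℕ) (hlam : 0 < lam) (Λ : Finset (ℝ × ℝ))
    (hsym : ∀ ξ ∈ Λ, -ξ ∈ Λ)
    (hunit : ∀ ξ ∈ Λ, ξ.1 ^ 2 + ξ.2 ^ 2 = 1)
    (hrat : ∀ ξ ∈ Λ, ∃ m n : ℤ, (lam : ℝ) * ξ.1 = m ∧ (lam : ℝ) * ξ.2 = n)
    (a : ℝ × ℝ → ℂ) (ha : ∀ ξ ∈ Λ, starRingEnd ℂ (a ξ) = a (-ξ))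
    (W₁ W₂ Ψ : ℝ × ℝ → ℂ)
    (hW₁ : W₁ = fun x => ∑ ξ ∈ Λ,
      a ξ * Complex.I * (-ξ.2 : ℝ) * Complex.exp (Complex.I * lam * (ξ.1 * x.1 + ξ.2 * x.2)))
    (hW₂ : W₂ = fun x => ∑ ξ ∈ Λ,
      a ξ * Complex.I * (ξ.1 : ℝ) * Complex.exp (Complex.I * lam * (ξ.1 * x.1 + ξ.2 * x.2)))
    (hΨ : Ψ = fun x => ∑ ξ ∈ Λ,
      a ξ * Complex.exp (Complex.I * lam * (ξ.1 * x.1 + ξ.2 * x.2))) :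
    -- W and Ψ are real-valued
    (∀ x : ℝ × ℝ, (W₁ x).im = 0 ∧ (W₂ x).im = 0 ∧ (Ψ x).im = 0) ∧
    -- W = λ⁻¹ ∇^⊥ Ψ
    (∀ x : ℝ × ℝ, W₁ x = -(lam : ℂ)⁻¹ * fderiv ℝ Ψ x (0, 1)
        ∧ W₂ x = (lam : ℂ)⁻¹ * fderiv ℝ Ψ x (1, 0)) ∧
    -- div W = 0
    (∀ x : ℝ × ℝ, fderiv ℝ W₁ x (1, 0) + fderiv ℝ W₂ x (0, 1) = 0) ∧
    -- div (W ⊗ W) = ∇(|W|²/2 + Ψ²/2)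
    (∀ x : ℝ × ℝ,
      (fderiv ℝ (fun y => W₁ y * W₁ y) x (1, 0) + fderiv ℝ (fun y => W₁ y * W₂ y) x (0, 1)
        = fderiv ℝ (fun y => (W₁ y ^ 2 + W₂ y ^ 2) / 2 + Ψ y ^ 2 / 2) x (1, 0)) ∧
      (fderiv ℝ (fun y => W₂ y * W₁ y) x (1, 0) + fderiv ℝ (fun y => W₂ y * W₂ y) x (0, 1)
        = fderiv ℝ (fun y => (W₁ y ^ 2 + W₂ y ^ 2) / 2 + Ψ y ^ 2 / 2) x (0, 1))) :=
  stmt2_general lam hlam Λ hsym hunit a ha W₁ W₂ Ψ hW₁ hW₂ hΨ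
end
end

section
/- Let Λ₀⁺ = {e₁, (3/5)e₁ + (4/5)e₂, (3/5)e₁ − (4/5)e₂}. There exists ε₀ > 0 and smooth positive functions γ_ξ : B_{ε₀}(Id) → (0,∞) for ξ ∈ Λ₀⁺, defined on the ball of radius ε₀ around the identity in the space of symmetric 2×2 matrices, such that every symmetric 2×2 matrix R with |R − Id| < ε₀ satisfies R = Σ_{ξ ∈ Λ₀⁺} γ_ξ(R)² ξ ⊗ ξ. -/
noncomputable section

attribute [local instance] Matrix.normedAddCommGroup Matrix.normedSpace

/-- The three directions of `Λ₀⁺`. -/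
def Lambda0 : Fin 3 → Fin 2 → ℝ := ![![1, 0], ![3/5, 4/5], ![3/5, -(4/5)]]

/-- affine coefficient functions -/
def cfun : Fin 3 → Matrix (Fin 2) (Fin 2) ℝ → ℝ :=
  ![fun R => R 0 0 - 9/16 * R 1 1,
    fun R => 25/32 * R 1 1 + 25/24 * R 0 1,
    fun R => 25/32 * R 1 1 - 25/24 * R 0 1]

lemma entry_contDiff (i j : Fin 2) :
    ContDiff ℝ (⊤ : ℕ∞) (fun R : Matrix (Fin 2) (Fin 2) ℝ => R i j) :=
  (LinearMap.toContinuousLinearMap (Matrix.entryLinearMap ℝ ℝ i j)).contDiff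

lemma cfun_contDiff (i : Fin 3) : ContDiff ℝ (⊤ : ℕ∞) (cfun i) := by
  fin_cases i <;> simp only [cfun, Matrix.cons_val_zero, Matrix.cons_val_one, Matrix.head_cons,
    Matrix.cons_val_two, Matrix.tail_cons]
  · exact (entry_contDiff 0 0).sub (contDiff_const.mul (entry_contDiff 1 1))
  · exact (contDiff_const.mul (entry_contDiff 1 1)).add (contDiff_const.mul (entry_contDiff 0 1))
  · exact (contDiff_const.mul (entry_contDiff 1 1)).sub (contDiff_const.mul (entry_contDiff 0 1))

lemma entry_bound {R : Matrix (Fin 2) (Fin 2) ℝ}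
    (hR : R ∈ Metric.ball (1 : Matrix (Fin 2) (Fin 2) ℝ) (1/10)) (i j : Fin 2) :
    |R i j - (1 : Matrix (Fin 2) (Fin 2) ℝ) i j| < 1/10 := by
  have h : ‖R - 1‖ < 1/10 := by
    rw [Metric.mem_ball, dist_eq_norm] at hR; exact hR
  calc |R i j - (1 : Matrix (Fin 2) (Fin 2) ℝ) i j| = ‖(R - 1) i j‖ := by
        simp [Matrix.sub_apply, Real.norm_eq_abs]
    _ ≤ ‖R - 1‖ := Matrix.norm_entry_le_entrywise_sup_norm _
    _ < 1/10 := h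

lemma cfun_pos (i : Fin 3) {R : Matrix (Fin 2) (Fin 2) ℝ}
    (hR : R ∈ Metric.ball (1 : Matrix (Fin 2) (Fin 2) ℝ) (1/10)) : 0 < cfun i R := by
  have h00 := entry_bound hR 0 0
  have h01 := entry_bound hR 0 1
  have h11 := entry_bound hR 1 1
  rw [Matrix.one_apply_eq, abs_sub_lt_iff] at h00 h11
  rw [show (1 : Matrix (Fin 2) (Fin 2) ℝ) 0 1 = 0 from Matrix.one_apply_ne (by decide),
    sub_zero, abs_lt] at h01
  fin_cases i
  · show 0 < R 0 0 - 9/16 * R 1 1; linarith [h00.1, h00.2, h11.1, h11.2]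
  · show 0 < 25/32 * R 1 1 + 25/24 * R 0 1; linarith [h11.1, h11.2, h01.1, h01.2]
  · show 0 < 25/32 * R 1 1 - 25/24 * R 0 1; linarith [h11.1, h11.2, h01.1, h01.2]

/-- Geometric Lemma: decomposition of symmetric matrices near the identity. -/
theorem stmt5 :
    ∃ ε₀ : ℝ, 0 < ε₀ ∧
      ∃ γ : Fin 3 → Matrix (Fin 2) (Fin 2) ℝ → ℝ,
        (∀ i, ContDiffOn ℝ (⊤ : ℕ∞) (γ i) (Metric.ball (1 : Matrix (Fin 2) (Fin 2) ℝ) ε₀)) ∧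
        (∀ i, ∀ R ∈ Metric.ball (1 : Matrix (Fin 2) (Fin 2) ℝ) ε₀, 0 < γ i R) ∧
        (∀ R : Matrix (Fin 2) (Fin 2) ℝ, R.IsSymm →
          R ∈ Metric.ball (1 : Matrix (Fin 2) (Fin 2) ℝ) ε₀ →
          R = ∑ i : Fin 3, (γ i R) ^ 2 • Matrix.vecMulVec (Lambda0 i) (Lambda0 i)) := by
  refine ⟨1/10, by norm_num, fun i R => Real.sqrt (cfun i R), ?_, ?_, ?_⟩
  · intro i
    intro R hR
    refine ((Real.contDiffAt_sqrt (ne_of_gt (cfun_pos i hR))).comp R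
      (cfun_contDiff i).contDiffAt).contDiffWithinAt
  · intro i R hR
    exact Real.sqrt_pos.mpr (cfun_pos i hR)
  · intro R hsymm hR
    have hsq : ∀ i, Real.sqrt (cfun i R) ^ 2 = cfun i R :=
      fun i => Real.sq_sqrt (cfun_pos i hR).le
    have h10 : R 1 0 = R 0 1 := by
      have := hsymm.apply 1 0
      simpa using this.symm
    ext i j
    simp only [Fin.sum_univ_three, Matrix.add_apply, Matrix.smul_apply, smul_eq_mul, hsq]
    fin_cases i <;> fin_cases j <;>
      simp [cfun, Lambda0, Matrix.vecMulVec_apply, h10] <;> ring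
end
end
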